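/- arXiv:2402.03966 — 3 statements merged into one kernel-verified Lean document; each statement's English description precedes it below -/
import Mathlib

section
/- Let a : ℝ → ℝ be analytic and non-polynomial, and let x₁, ..., xₘ be real numbers with 0 < |x₁| < |x₂| < ... < |xₘ|. Then for all but countably many γ ∈ [0,1], the real numbers a(γx₁), ..., a(γxₘ) are linearly independent over ℚ. -/
/-!
For fixed `l ≠ 0` the function `γ ↦ ∑ lᵢ a(γ xᵢ)` is analytic on `ℝ`, so either its zero set is
discrete, hence countable, or it vanishes identically. In the latter case its `n`-th derivative at
`0`, namely `(∑ lᵢ xᵢⁿ) a⁽ⁿ⁾(0)`, vanishes for every `n`. Since the `|xᵢ|` are distinct and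
nonzero, the term with the largest `|xᵢ|` dominates `∑ lᵢ xᵢⁿ` for large `n`, so `a⁽ⁿ⁾(0) = 0`
eventually, and then the Taylor expansion at `0` and the identity theorem make `a` a polynomial.
The bad set is the union of these zero sets over the countably many `l ∈ ℚᵐ \ {0}`.
-/

open Filter Topology Polynomial

theorem eventually_sum_mul_pow_ne_zero {𝕜 ι : Type*} [NormedField 𝕜] [Fintype ι]
    {l x : ι → 𝕜} (hl : l ≠ 0) (hx : ∀ i, x i ≠ 0) (hinj : Function.Injective (‖x ·‖)) :
    ∀ᶠ n in atTop, ∑ i, l i * x i ^ n ≠ 0 := by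
  classical
  obtain ⟨i₀, hi₀⟩ := Function.ne_iff.mp hl
  obtain ⟨j, hj, hjmax⟩ :=
    Finset.exists_max_image {i | l i ≠ 0} (‖x ·‖) ⟨i₀, by simpa using hi₀⟩
  simp only [Finset.mem_filter, Finset.mem_univ, true_and] at hj hjmax
  -- After dividing by `x j ^ n`, every term but the `j`-th decays geometrically.
  have hlim : Tendsto (fun n ↦ ∑ i, l i * (x i / x j) ^ n) atTop
      (𝓝 (∑ i, if i = j then l j else 0)) := by
    refine tendsto_finsetSum _ fun i _ ↦ ?_
    rcases eq_or_ne i j with rfl | hij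
    · simp [div_self (hx i)]
    by_cases hli : l i = 0
    · simp [hli, hij]
    have hlt : ‖x i / x j‖ < 1 := by
      rw [norm_div, div_lt_one (norm_pos_iff.mpr (hx j))]
      exact (hjmax i hli).lt_of_ne (hinj.ne hij)
    simpa [hij] using (tendsto_pow_atTop_nhds_zero_of_norm_lt_one hlt).const_mul (l i)
  rw [Finset.sum_ite_eq' Finset.univ j, if_pos (Finset.mem_univ j)] at hlim
  filter_upwards [hlim.eventually_ne hj] with n hn
  have hsplit : ∑ i, l i * x i ^ n = x j ^ n * ∑ i, l i * (x i / x j) ^ n := by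
    rw [Finset.mul_sum]
    refine Finset.sum_congr rfl fun i _ ↦ ?_
    rw [div_pow]
    field_simp [hx j]
  rw [hsplit]
  exact mul_ne_zero (pow_ne_zero n (hx j)) hn

theorem iteratedDeriv_sum_mul_comp_mul_zero {𝕜 ι : Type*} [NontriviallyNormedField 𝕜]
    (s : Finset ι) {n : ℕ} {a : 𝕜 → 𝕜} (ha : ContDiff 𝕜 n a) (l x : ι → 𝕜) :
    iteratedDeriv n (fun γ ↦ ∑ i ∈ s, l i * a (γ * x i)) 0
      = (∑ i ∈ s, l i * x i ^ n) * iteratedDeriv n a 0 := by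
  have hcomp (i : ι) : ContDiff 𝕜 n fun γ ↦ a (γ * x i) :=
    ha.comp (contDiff_id.mul contDiff_const)
  rw [iteratedDeriv_fun_sum (f := fun i γ ↦ l i * a (γ * x i))
    fun i _ ↦ (contDiff_const.mul (hcomp i)).contDiffAt, Finset.sum_mul]
  refine Finset.sum_congr rfl fun i _ ↦ ?_
  simp_rw [iteratedDeriv_const_mul_field, mul_comm _ (x i), iteratedDeriv_comp_const_mul ha,
    mul_zero, mul_assoc]

theorem AnalyticOnNhd.exists_polynomial_of_iteratedDeriv_eq_zero {𝕜 : Type*} [RCLike 𝕜]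
    {a : 𝕜 → 𝕜} (ha : AnalyticOnNhd 𝕜 a Set.univ) {N : ℕ}
    (hN : ∀ n ≥ N, iteratedDeriv n a 0 = 0) :
    ∃ p : 𝕜[X], ∀ z, a z = p.eval z := by
  set c : ℕ → 𝕜 := fun n ↦ iteratedDeriv n a 0 / n.factorial
  refine ⟨∑ n ∈ Finset.range N, C (c n) * X ^ n, congrFun <| ha.eq_of_eventuallyEq
    (AnalyticOnNhd.eval_polynomial _) (z₀ := 0) ?_⟩
  filter_upwards [hasFPowerSeriesAt_iff.mp (ha 0 trivial).hasFPowerSeriesAt] with z hz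
  simp only [zero_add, FormalMultilinearSeries.coeff_ofScalars, smul_eq_mul] at hz
  refine hz.unique ?_
  simp only [eval_finsetSum, eval_mul, eval_C, eval_pow, eval_X, mul_comm (c _)]
  refine hasSum_sum_of_ne_finset_zero fun n hn ↦ ?_
  simp [hN n (by simpa using hn)]

theorem AnalyticOnNhd.countable_preimage_zero {𝕜 E : Type*} [NontriviallyNormedField 𝕜]
    [SecondCountableTopology 𝕜] [ConnectedSpace 𝕜] [NormedAddCommGroup E] [NormedSpace 𝕜 E]
    {f : 𝕜 → E} (hf : AnalyticOnNhd 𝕜 f Set.univ) {z : 𝕜} (hz : f z ≠ 0) :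
    (f ⁻¹' {0}).Countable :=
  (HereditarilyLindelofSpace.isLindelof _).countable_of_isDiscrete
    (by simpa using (mem_codiscrete'.mp (hf.preimage_zero_mem_codiscrete hz)).2)

theorem countable_setOf_sum_mul_comp_mul_eq_zero {𝕜 ι : Type*} [RCLike 𝕜] [Fintype ι]
    {a : 𝕜 → 𝕜} (ha : AnalyticOnNhd 𝕜 a Set.univ) (hnp : ¬ ∃ p : 𝕜[X], ∀ z, a z = p.eval z)
    {l x : ι → 𝕜} (hl : l ≠ 0) (hx : ∀ i, x i ≠ 0) (hinj : Function.Injective (‖x ·‖)) :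
    {γ | ∑ i, l i * a (γ * x i) = 0}.Countable := by
  set f : 𝕜 → 𝕜 := fun γ ↦ ∑ i, l i * a (γ * x i)
  have hf : AnalyticOnNhd 𝕜 f Set.univ := fun γ _ ↦
    Finset.analyticAt_fun_sum _ fun i _ ↦
      analyticAt_const.mul ((ha _ trivial).comp (analyticAt_id.mul analyticAt_const))
  by_cases hf0 : ∃ γ, f γ ≠ 0
  · obtain ⟨γ, hγ⟩ := hf0
    exact hf.countable_preimage_zero hγ
  push Not at hf0
  obtain ⟨N, hN⟩ := (eventually_sum_mul_pow_ne_zero hl hx hinj).exists_forall_of_atTop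
  refine absurd (ha.exists_polynomial_of_iteratedDeriv_eq_zero (N := N) fun n hn ↦ ?_) hnp
  have hderiv := iteratedDeriv_sum_mul_comp_mul_zero Finset.univ (n := n) ha.contDiff l x
  rw [show (fun γ ↦ ∑ i, l i * a (γ * x i)) = 0 from funext hf0,
    iteratedDeriv_const_zero] at hderiv
  exact (mul_eq_zero.mp hderiv.symm).resolve_left (hN n hn)

theorem stmt_7 (a : ℝ → ℝ) (ha : ∀ x : ℝ, AnalyticAt ℝ a x)
    (hnp : ¬ ∃ p : Polynomial ℝ, ∀ x : ℝ, a x = p.eval x)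
    (m : ℕ) (hm : 0 < m) (x : Fin m → ℝ)
    (h0 : 0 < |x ⟨0, hm⟩|) (hmono : StrictMono fun i => |x i|) :
    {γ ∈ Set.Icc (0:ℝ) 1 |
      ∃ l : Fin m → ℚ, l ≠ 0 ∧ ∑ i, (l i : ℝ) * a (γ * x i) = 0}.Countable := by
  have hx (i : Fin m) : x i ≠ 0 :=
    abs_pos.mp (h0.trans_le (hmono.monotone (Fin.le_def.mpr (Nat.zero_le _))))
  have hinj : Function.Injective (‖x ·‖) := by
    simpa only [Real.norm_eq_abs] using hmono.injective
  have hzeros (l : Fin m → ℚ) (hl : l ≠ 0) :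
      {γ : ℝ | ∑ i, (l i : ℝ) * a (γ * x i) = 0}.Countable :=
    countable_setOf_sum_mul_comp_mul_eq_zero (fun z _ ↦ ha z) hnp
      (fun h ↦ hl (funext fun i ↦ by simpa using congrFun h i)) hx hinj
  refine (Set.countable_iUnion fun l : {l : Fin m → ℚ // l ≠ 0} ↦ hzeros l l.2).mono ?_
  rintro γ ⟨-, l, hl, hγ⟩
  exact Set.mem_iUnion.mpr ⟨⟨l, hl⟩, hγ⟩
end

section
/- The square roots of the prime numbers are linearly independent over ℚ: for any finite set of distinct primes p₁, ..., pₘ and rationals λ₁, ..., λₘ, if λ₁√p₁ + ... + λₘ√pₘ = 0 then all λᵢ = 0. -/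
/-!
A relation `∑ λᵢ √pᵢ = 0` with `λⱼ ≠ 0` puts `√pⱼ` in the field generated by the other `√pᵢ`.
This is excluded by induction on a finite set `S` of primes: `√d ∉ ℚ(√q : q ∈ S)` for every
squarefree `d ≠ 1` prime to `S`. Every element of `F(√q)` has the form `a + b√q` with `a, b ∈ F`,
and squaring `√d = a + b√q` shows `ab = 0`; then either `√d ∈ F` or `√(dq) = bq ∈ F`, and `dq`
is again squarefree and prime to the smaller set.
-/

open Real

namespace Subfield

variable {K : Type*} [Field K] (F : Subfield K) {u : K}

theorem exists_inv_add_mul_eq (hu : u ^ 2 ∈ F) {a b : K} (ha : a ∈ F) (hb : b ∈ F) :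
    ∃ c ∈ F, ∃ d ∈ F, (a + b * u)⁻¹ = c + d * u := by
  set n := a ^ 2 - b ^ 2 * u ^ 2
  have hn : n ∈ F := F.sub_mem (F.pow_mem ha 2) (F.mul_mem (F.pow_mem hb 2) hu)
  have hconj : (a + b * u) * (a - b * u) = n := by ring
  -- Multiply by the conjugate; if the norm `n` vanishes, then `a + b u` is `0` or `2a`.
  by_cases hn0 : n = 0
  · rcases mul_eq_zero.mp (hconj.trans hn0) with h | h
    · exact ⟨0, F.zero_mem, 0, F.zero_mem, by simp [h]⟩
    · have h2a : a + b * u = a + a := by linear_combination -h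
      exact ⟨(a + a)⁻¹, F.inv_mem (F.add_mem ha ha), 0, F.zero_mem, by simp [h2a]⟩
  · refine ⟨a / n, F.div_mem ha hn, -b / n, F.div_mem (F.neg_mem hb) hn,
      inv_eq_of_mul_eq_one_right ?_⟩
    calc (a + b * u) * (a / n + -b / n * u) = (a + b * u) * (a - b * u) / n := by ring
      _ = 1 := by rw [hconj, div_self hn0]

def adjoinSqrt (hu : u ^ 2 ∈ F) : Subfield K where
  carrier := {x | ∃ a ∈ F, ∃ b ∈ F, x = a + b * u}
  zero_mem' := ⟨0, F.zero_mem, 0, F.zero_mem, by ring⟩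
  one_mem' := ⟨1, F.one_mem, 0, F.zero_mem, by ring⟩
  add_mem' := by
    rintro _ _ ⟨a, ha, b, hb, rfl⟩ ⟨c, hc, d, hd, rfl⟩
    exact ⟨a + c, F.add_mem ha hc, b + d, F.add_mem hb hd, by ring⟩
  neg_mem' := by
    rintro _ ⟨a, ha, b, hb, rfl⟩
    exact ⟨-a, F.neg_mem ha, -b, F.neg_mem hb, by ring⟩
  mul_mem' := by
    rintro _ _ ⟨a, ha, b, hb, rfl⟩ ⟨c, hc, d, hd, rfl⟩
    exact ⟨a * c + b * d * u ^ 2, F.add_mem (F.mul_mem ha hc) (F.mul_mem (F.mul_mem hb hd) hu),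
      a * d + b * c, F.add_mem (F.mul_mem ha hd) (F.mul_mem hb hc), by ring⟩
  inv_mem' := by
    rintro _ ⟨a, ha, b, hb, rfl⟩
    exact F.exists_inv_add_mul_eq hu ha hb

theorem exists_eq_add_mul_of_mem_closure_insert (hu : u ^ 2 ∈ F) {x : K}
    (hx : x ∈ closure (insert u (F : Set K))) : ∃ a ∈ F, ∃ b ∈ F, x = a + b * u := by
  have : closure (insert u (F : Set K)) ≤ F.adjoinSqrt hu := by
    rw [closure_le, Set.insert_subset_iff]
    exact ⟨⟨0, F.zero_mem, 1, F.one_mem, by ring⟩, fun y hy ↦ ⟨y, hy, 0, F.zero_mem, by ring⟩⟩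
  exact this hx

theorem notMem_closure_insert_of_sq_mem [NeZero (2 : K)] {v : K} (hu : u ^ 2 ∈ F)
    (hu' : u ∉ F) (hv : v ^ 2 ∈ F) (hv' : v ∉ F) (huv : u * v ∉ F) :
    v ∉ closure (insert u (F : Set K)) := by
  intro hmem
  obtain ⟨a, ha, b, hb, rfl⟩ := F.exists_eq_add_mul_of_mem_closure_insert hu hmem
  have hab : 2 * a * b ∈ F := F.mul_mem (F.mul_mem (ofNat_mem F 2) ha) hb
  -- `(a + b u)² = a² + b² u² + 2ab u`, so `2ab u ∈ F`, forcing `2ab = 0`.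
  have habu : 2 * a * b * u ∈ F := by
    rw [show 2 * a * b * u = (a + b * u) ^ 2 - a ^ 2 - b ^ 2 * u ^ 2 by ring]
    exact F.sub_mem (F.sub_mem hv (F.pow_mem ha 2)) (F.mul_mem (F.pow_mem hb 2) hu)
  have hab0 : 2 * a * b = 0 := by
    by_contra h
    apply hu'
    have := F.mul_mem (F.inv_mem hab) habu
    rwa [← mul_assoc, inv_mul_cancel₀ h, one_mul] at this
  rcases mul_eq_zero.mp hab0 with ha0 | rfl
  · obtain rfl : a = 0 := (mul_eq_zero.mp ha0).resolve_left two_ne_zero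
    rw [zero_add, mul_left_comm, ← sq] at huv
    exact huv (F.mul_mem hb hu)
  · exact hv' (by simpa using ha)

theorem mem_closure_image_erase_of_sum_eq_zero [CharZero K] {ι : Type*} [DecidableEq ι]
    {s : Finset ι} (l : ι → ℚ) (v : ι → K) (h : ∑ i ∈ s, (l i : K) * v i = 0) {j : ι}
    (hj : j ∈ s) (hlj : l j ≠ 0) : v j ∈ closure (v '' (s.erase j : Set ι)) := by
  rw [← Finset.add_sum_erase s _ hj] at h
  have hvj : v j = -(l j : K)⁻¹ * ∑ i ∈ s.erase j, (l i : K) * v i := by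
    rw [eq_neg_of_add_eq_zero_right h]
    field_simp
  rw [hvj]
  refine mul_mem (neg_mem (inv_mem (SubfieldClass.ratCast_mem _ _))) (sum_mem fun i hi ↦ ?_)
  exact mul_mem (SubfieldClass.ratCast_mem _ _) (subset_closure ⟨i, hi, rfl⟩)

end Subfield

theorem Irrational.notMem_subfield_bot {x : ℝ} (hx : Irrational x) : x ∉ (⊥ : Subfield ℝ) := by
  rw [Subfield.bot_eq_of_charZero, RingHom.mem_fieldRange]
  rintro ⟨q, rfl⟩
  exact hx ⟨q, rfl⟩

theorem irrational_sqrt_of_squarefree {d : ℕ} (hd : Squarefree d) (hd1 : d ≠ 1) :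
    Irrational √d := by
  rw [irrational_sqrt_natCast_iff]
  rintro ⟨r, rfl⟩
  exact hd1 (by simp [Nat.isUnit_iff.mp (hd r dvd_rfl)])

noncomputable def sqrtSubfield (S : Set ℕ) : Subfield ℝ :=
  Subfield.closure ((fun n : ℕ ↦ √n) '' S)

theorem sqrtSubfield_insert_le (q : ℕ) (S : Set ℕ) :
    sqrtSubfield (insert q S) ≤ Subfield.closure (insert √q (sqrtSubfield S : Set ℝ)) := by
  rw [sqrtSubfield, Set.image_insert_eq]
  exact Subfield.closure_mono (Set.insert_subset_insert Subfield.subset_closure)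

theorem sqrt_notMem_sqrtSubfield {S : Set ℕ} (hS : S.Finite) (hprime : ∀ q ∈ S, q.Prime)
    {d : ℕ} (hd : Squarefree d) (hd1 : d ≠ 1) (hdvd : ∀ q ∈ S, ¬ q ∣ d) :
    √d ∉ sqrtSubfield S := by
  induction S, hS using Set.Finite.induction_on generalizing d with
  | empty =>
    simpa [sqrtSubfield] using (irrational_sqrt_of_squarefree hd hd1).notMem_subfield_bot
  | @insert q S hqS hS ih =>
    have hq : q.Prime := hprime q (Set.mem_insert q S)
    have hprime' : ∀ r ∈ S, r.Prime := fun r hr ↦ hprime r (Set.mem_insert_of_mem q hr)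
    have hdvd' : ∀ r ∈ S, ¬ r ∣ d := fun r hr ↦ hdvd r (Set.mem_insert_of_mem q hr)
    have hqdvd : ∀ r ∈ S, ¬ r ∣ q := fun r hr hrq ↦
      hqS ((Nat.prime_dvd_prime_iff_eq (hprime' r hr) hq).mp hrq ▸ hr)
    have hqd : ¬ q ∣ d := hdvd q (Set.mem_insert q S)
    have hsq (n : ℕ) : √(n : ℝ) ^ 2 ∈ sqrtSubfield S := by
      rw [sq_sqrt n.cast_nonneg]
      exact natCast_mem _ n
    refine fun hmem ↦ Subfield.notMem_closure_insert_of_sq_mem _ (hsq q)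
      (ih hprime' hq.squarefree hq.one_lt.ne' hqdvd) (hsq d) (ih hprime' hd hd1 hdvd') ?_
      (sqrtSubfield_insert_le q S hmem)
    rw [← sqrt_mul (Nat.cast_nonneg q), ← Nat.cast_mul]
    refine ih hprime' ?_ ?_ ?_
    · exact (Nat.squarefree_mul ((hq.coprime_iff_not_dvd).mpr hqd)).mpr ⟨hq.squarefree, hd⟩
    · exact fun h ↦ hq.ne_one (Nat.eq_one_of_mul_eq_one_right h)
    · exact fun r hr h ↦ ((hprime' r hr).dvd_mul.mp h).elim (hqdvd r hr) (hdvd' r hr)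

theorem stmt_10 (m : ℕ) (p : Fin m → ℕ) (hp : ∀ i, (p i).Prime)
    (hinj : Function.Injective p) (l : Fin m → ℚ)
    (h : ∑ i, (l i : ℝ) * Real.sqrt (p i) = 0) : l = 0 := by
  classical
  by_contra hl
  obtain ⟨j, hj⟩ := Function.ne_iff.mp hl
  have hmem := Subfield.mem_closure_image_erase_of_sum_eq_zero l (fun i ↦ √(p i : ℝ)) h
    (Finset.mem_univ j) hj
  refine sqrt_notMem_sqrtSubfield (S := p '' (Finset.univ.erase j : Set (Fin m)))
    (Set.toFinite _) ?_ (hp j).squarefree (hp j).one_lt.ne' ?_ ?_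
  · rintro _ ⟨i, -, rfl⟩
    exact hp i
  · rintro _ ⟨i, hi, rfl⟩ hdvd
    exact (Finset.mem_erase.mp hi).1 (hinj ((Nat.prime_dvd_prime_iff_eq (hp i) (hp j)).mp hdvd))
  · rwa [sqrtSubfield, Set.image_image]
end

section
/- Let F ⊆ ℝ be finite and linearly independent over ℚ, let n ∈ ℕ, and suppose s = n·f + ∑_{x ∈ F} c(x)·x = n·f' + ∑_{x ∈ F} c'(x)·x where f, f' ∈ F and c, c' : F → ℕ with ∑ c(x) ≤ n - 1 and ∑ c'(x) ≤ n - 1. Then f = f' and c = c'. -/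
theorem stmt_12 (F : Finset ℝ)
    (hF : LinearIndependent ℚ (fun x : {x // x ∈ F} => (x : ℝ)))
    (n : ℕ) (hn : 1 ≤ n) (f f' : ℝ) (hf : f ∈ F) (hf' : f' ∈ F)
    (c c' : {x // x ∈ F} → ℕ)
    (hc : ∑ x ∈ F.attach, c x ≤ n - 1) (hc' : ∑ x ∈ F.attach, c' x ≤ n - 1)
    (h : (n : ℝ) * f + ∑ x ∈ F.attach, (c x : ℝ) * (x : ℝ)
       = (n : ℝ) * f' + ∑ x ∈ F.attach, (c' x : ℝ) * (x : ℝ)) :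
    f = f' ∧ c = c' := by
  set a : {x // x ∈ F} := ⟨f, hf⟩ with ha
  set b : {x // x ∈ F} := ⟨f', hf'⟩ with hb
  set g : {x // x ∈ F} → ℚ := fun x =>
    ((if x = a then (n : ℚ) else 0) + c x) - ((if x = b then (n : ℚ) else 0) + c' x) with hgdef
  have hg0 : ∑ x, g x • (x : ℝ) = 0 := by
    have e1 : ∑ x ∈ F.attach, ((if x = a then (n : ℝ) else 0) * x) = n * f := by
      simp only [ite_mul, zero_mul]
      rw [Finset.sum_ite_eq' F.attach a (fun x => (n : ℝ) * x)]
      simp [Finset.mem_attach, ha]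
    have e2 : ∑ x ∈ F.attach, ((if x = b then (n : ℝ) else 0) * x) = n * f' := by
      simp only [ite_mul, zero_mul]
      rw [Finset.sum_ite_eq' F.attach b (fun x => (n : ℝ) * x)]
      simp [Finset.mem_attach, hb]
    have hcast : ∀ x : {x // x ∈ F}, (g x : ℝ)
        = ((if x = a then (n : ℝ) else 0) + c x) - ((if x = b then (n : ℝ) else 0) + c' x) := by
      intro x
      simp [hgdef, apply_ite (fun q : ℚ => (q : ℝ))]
    have hmain : ∑ x ∈ F.attach, (g x : ℝ) * x = 0 := by
      simp only [hcast, sub_mul, add_mul, Finset.sum_sub_distrib, Finset.sum_add_distrib, e1, e2]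
      linarith [h]
    rw [Finset.univ_eq_attach]
    simpa [Rat.smul_def] using hmain
  have hzero : ∀ x, g x = 0 := Fintype.linearIndependent_iff.mp hF g hg0
  have key : ∀ x, (if x = a then (n : ℚ) else 0) + c x = (if x = b then (n : ℚ) else 0) + c' x := by
    intro x
    have := hzero x
    simpa [hgdef, sub_eq_zero] using this
  have hab : a = b := by
    by_contra hne
    have := key a
    rw [if_pos rfl, if_neg hne] at this
    have hnat : n + c a = 0 + c' a := by exact_mod_cast this
    have h1 : c' a ≤ ∑ x ∈ F.attach, c' x :=
      Finset.single_le_sum (fun i _ => Nat.zero_le _) (Finset.mem_attach _ _)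
    omega
  have hff' : f = f' := congrArg Subtype.val hab
  refine ⟨hff', funext fun x => ?_⟩
  have hx0 := key x
  rw [hab] at hx0
  by_cases hx : x = b
  · subst hx
    simp at hx0
    exact_mod_cast hx0
  · simp [hx] at hx0
    exact_mod_cast hx0
end
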